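/- Let (A,{·,·},μ,α,β) be a BiHom-Poisson algebra with α and β bijective, and let (V,φ,ψ) be a left BiHom-Poisson A-module with structure maps λ and ρ and with φ and ψ bijective. Then the direct sum A ⊕ V, equipped with the products (a+u)∗(b+v) = μ(a,b) + λ(a,v) + λ(α⁻¹β(b), ψ⁻¹φ(u)) and [a+u, b+v] = {a,b} + ρ(a,v) − ρ(α⁻¹β(b), ψ⁻¹φ(u)), and the maps α̃(a+u) = α(a)+φ(u) and β̃(a+u) = β(a)+ψ(u), is a BiHom-Poisson algebra (the semidirect product of A and V). -/
import Mathlib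


/-- A BiHom-Poisson algebra structure on a `K`-vector space `A` (K a field of
characteristic 0), given by bilinear maps `br` (the bracket `{·,·}`) and
`mul` (the product `μ`) and commuting linear maps `α`, `β` that are
multiplicative with respect to both operations. -/
structure IsBiHomPoisson {K A : Type*} [Field K] [CharZero K]
    [AddCommGroup A] [Module K A]
    (br mul : A →ₗ[K] A →ₗ[K] A) (α β : A →ₗ[K] A) : Prop where
  comm_maps : ∀ x, α (β x) = β (α x)
  map_mul_alpha : ∀ x y, α (mul x y) = mul (α x) (α y)
  map_mul_beta : ∀ x y, β (mul x y) = mul (β x) (β y)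
  map_br_alpha : ∀ x y, α (br x y) = br (α x) (α y)
  map_br_beta : ∀ x y, β (br x y) = br (β x) (β y)
  assoc : ∀ x y z, mul (mul x y) (β z) = mul (α x) (mul y z)
  mul_comm : ∀ x y, mul (β x) (α y) = mul (β y) (α x)
  skew : ∀ x y, br (β x) (α y) = - br (β y) (α x)
  jacobi : ∀ x y z,
    br (β (β x)) (br (β y) (α z)) + br (β (β y)) (br (β z) (α x))
      + br (β (β z)) (br (β x) (α y)) = 0
  leibniz : ∀ x y z,
    br (α (β x)) (mul y z) = mul (br (β x) y) (β z) + mul (β y) (br (α x) z)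

/-- The product `(a+u)∗(b+v) = μ(a,b) + λ(a,v) + λ(α⁻¹β(b), ψ⁻¹φ(u))` of the
semidirect product, as a bilinear map on `A × V`. -/
noncomputable def sdMul {K A V : Type*} [Field K]
    [AddCommGroup A] [Module K A] [AddCommGroup V] [Module K V]
    (mul : A →ₗ[K] A →ₗ[K] A) (β αi : A →ₗ[K] A)
    (lam : A →ₗ[K] V →ₗ[K] V) (φ ψi : V →ₗ[K] V) :
    (A × V) →ₗ[K] (A × V) →ₗ[K] (A × V) :=
  LinearMap.mk₂ K
    (fun p q => (mul p.1 q.1, lam p.1 q.2 + lam (αi (β q.1)) (ψi (φ p.2))))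
    (fun p p' q => by refine Prod.ext ?_ ?_ <;> simp [map_add] <;> abel)
    (fun c p q => by refine Prod.ext ?_ ?_ <;> simp [map_smul, smul_add])
    (fun p q q' => by refine Prod.ext ?_ ?_ <;> simp [map_add] <;> abel)
    (fun c p q => by refine Prod.ext ?_ ?_ <;> simp [map_smul, smul_add])

/-- The bracket `[a+u, b+v] = {a,b} + ρ(a,v) − ρ(α⁻¹β(b), ψ⁻¹φ(u))` of the
semidirect product, as a bilinear map on `A × V`. -/
noncomputable def sdBr {K A V : Type*} [Field K]
    [AddCommGroup A] [Module K A] [AddCommGroup V] [Module K V]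
    (br : A →ₗ[K] A →ₗ[K] A) (β αi : A →ₗ[K] A)
    (rho : A →ₗ[K] V →ₗ[K] V) (φ ψi : V →ₗ[K] V) :
    (A × V) →ₗ[K] (A × V) →ₗ[K] (A × V) :=
  LinearMap.mk₂ K
    (fun p q => (br p.1 q.1, rho p.1 q.2 - rho (αi (β q.1)) (ψi (φ p.2))))
    (fun p p' q => by refine Prod.ext ?_ ?_ <;> simp [map_add] <;> abel)
    (fun c p q => by refine Prod.ext ?_ ?_ <;> simp [map_smul, smul_sub])
    (fun p q q' => by refine Prod.ext ?_ ?_ <;> simp [map_add] <;> abel)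
    (fun c p q => by refine Prod.ext ?_ ?_ <;> simp [map_smul, smul_sub])

/-- The semidirect product of a BiHom-Poisson algebra (with bijective
structure maps) and a left BiHom-Poisson module (with bijective structure
maps) is a BiHom-Poisson algebra. -/
theorem semidirect_biHomPoisson {K A V : Type*} [Field K] [CharZero K]
    [AddCommGroup A] [Module K A] [AddCommGroup V] [Module K V]
    (br mul : A →ₗ[K] A →ₗ[K] A) (α β : A →ₗ[K] A)
    (h : IsBiHomPoisson br mul α β)
    (αi : A →ₗ[K] A) (hααi : ∀ x, α (αi x) = x) (hαiα : ∀ x, αi (α x) = x)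
    (hβbij : Function.Bijective β)
    (lam rho : A →ₗ[K] V →ₗ[K] V) (φ ψ : V →ₗ[K] V)
    (hφψ : ∀ v, φ (ψ v) = ψ (φ v))
    (hφbij : Function.Bijective φ)
    (ψi : V →ₗ[K] V) (hψψi : ∀ v, ψ (ψi v) = v) (hψiψ : ∀ v, ψi (ψ v) = v)
    (hφlam : ∀ x v, φ (lam x v) = lam (α x) (φ v))
    (hψlam : ∀ x v, ψ (lam x v) = lam (β x) (ψ v))
    (hφrho : ∀ x v, φ (rho x v) = rho (α x) (φ v))
    (hψrho : ∀ x v, ψ (rho x v) = rho (β x) (ψ v))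
    (m1 : ∀ x y v, lam (α x) (lam y v) = lam (mul x y) (ψ v))
    (m2 : ∀ x y v, rho (br (β x) y) (ψ v)
      = rho (α (β x)) (rho y v) - rho (β y) (rho (α x) v))
    (m3 : ∀ x y v, rho (α (β x)) (lam y v)
      = lam (br (β x) y) (ψ v) + lam (β y) (rho (α x) v))
    (m4 : ∀ x y v, rho (mul (β x) y) (ψ v)
      = lam (α (β x)) (rho y v) + lam (β y) (rho (α x) v)) :
    IsBiHomPoisson (sdBr br β αi rho φ ψi) (sdMul mul β αi lam φ ψi)
      (α.prodMap φ) (β.prodMap ψ) := by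
  obtain ⟨hc, hma, hmb, hba, hbb, hassoc, hmc, hskew, hjac, hlei⟩ := h
  have hαinj : Function.Injective α := fun x y hxy => by
    rw [← hαiα x, hxy, hαiα]
  have hψinj : Function.Injective ψ := fun x y hxy => by
    rw [← hψiψ x, hxy, hψiψ]
  have hαiβ : ∀ x, αi (β x) = β (αi x) := fun x => hαinj (by rw [hααi, hc, hααi])
  have hαimul : ∀ x y, αi (mul x y) = mul (αi x) (αi y) := fun x y =>
    hαinj (by rw [hααi, hma, hααi, hααi])
  have hαibr : ∀ x y, αi (br x y) = br (αi x) (αi y) := fun x y =>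
    hαinj (by rw [hααi, hba, hααi, hααi])
  have hφψi : ∀ v, φ (ψi v) = ψi (φ v) := fun v =>
    hψinj (by rw [← hφψ, hψψi, hψψi])
  have hψilam : ∀ x v, ψi (lam (β x) v) = lam x (ψi v) := fun x v =>
    hψinj (by rw [hψψi, hψlam, hψψi])
  have hψirho : ∀ x v, ψi (rho (β x) v) = rho x (ψi v) := fun x v =>
    hψinj (by rw [hψψi, hψrho, hψψi])
  refine ⟨?_, ?_, ?_, ?_, ?_, ?_, ?_, ?_, ?_, ?_⟩
  · rintro ⟨a, u⟩
    refine Prod.ext ?_ ?_ <;>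
      simp only [LinearMap.prodMap_apply, hc, hφψ]
  · rintro ⟨a, u⟩ ⟨b, v⟩
    refine Prod.ext ?_ ?_ <;>
      simp only [sdMul, LinearMap.mk₂_apply, LinearMap.prodMap_apply, map_add,
        hma, hφlam, hαiβ, hφψi, hc, hααi, hαiα]
  · rintro ⟨a, u⟩ ⟨b, v⟩
    refine Prod.ext ?_ ?_ <;>
      simp only [sdMul, LinearMap.mk₂_apply, LinearMap.prodMap_apply, map_add,
        hmb, hψlam, hαiβ, hφψ, hψψi, hψiψ, hc]
  · rintro ⟨a, u⟩ ⟨b, v⟩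
    refine Prod.ext ?_ ?_ <;>
      simp only [sdBr, LinearMap.mk₂_apply, LinearMap.prodMap_apply, map_sub,
        hba, hφrho, hαiβ, hφψi, hc, hααi, hαiα]
  · rintro ⟨a, u⟩ ⟨b, v⟩
    refine Prod.ext ?_ ?_ <;>
      simp only [sdBr, LinearMap.mk₂_apply, LinearMap.prodMap_apply, map_sub,
        hbb, hψrho, hαiβ, hφψ, hψψi, hψiψ, hc]
  · -- assoc
    rintro ⟨a, u⟩ ⟨b, v⟩ ⟨c, w⟩
    refine Prod.ext (hassoc a b c) ?_
    simp only [sdMul, LinearMap.mk₂_apply, LinearMap.prodMap_apply, map_add]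
    have eA : mul (αi (β (β (β (αi c))))) (α a) = mul (β a) (β (β (αi c))) := by
      simp only [hαiβ]
      rw [hmc]
      simp only [hc, hααi]
    have key2 : lam (αi (β (β c))) (ψi (φ (lam a v)))
        = lam (α a) (lam (αi (β c)) (ψi (φ v))) := by
      apply hψinj
      simp only [hψlam, hψψi, hφlam, hαiβ]
      rw [← hc, m1]
      conv_lhs => rw [← hααi (β (β (β (αi c))))]
      rw [m1, eA]
    have eB : mul (αi (β (β (β (αi c))))) (β b)
        = mul (β (β (αi b))) (β (β (αi c))) := by
      apply hαinj
      rw [hma, hma, hααi]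
      simp only [hc, hααi]
      rw [← hc, hmc]
      simp only [hc, hααi]
    have key3 : lam (αi (β (β c))) (ψi (φ (lam (αi (β b)) (ψi (φ u)))))
        = lam (αi (β (mul b c))) (ψi (φ (φ u))) := by
      apply hψinj
      simp only [hψlam, hψψi, hφlam, hφψi, hααi, hαiβ, hαimul, hmb, hc]
      conv_lhs => rw [← hααi (β (β (β (αi c))))]
      rw [m1, hψψi, eB]
    rw [← m1 a b w, key2, key3]
    abel
  · -- mul_comm
    rintro ⟨a, u⟩ ⟨b, v⟩
    refine Prod.ext (hmc a b) ?_
    simp only [sdMul, LinearMap.mk₂_apply, LinearMap.prodMap_apply,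
      hαiβ, hαiα, hc, hφψ, hψiψ]
    abel
  · -- skew
    rintro ⟨a, u⟩ ⟨b, v⟩
    refine Prod.ext (hskew a b) ?_
    simp only [sdBr, LinearMap.mk₂_apply, LinearMap.prodMap_apply, Prod.snd_neg,
      hαiβ, hαiα, hc, hφψ, hψiψ]
    abel
  · -- jacobi
    rintro ⟨a, u⟩ ⟨b, v⟩ ⟨c, w⟩
    refine Prod.ext ?_ ?_
    · simpa only [sdBr, LinearMap.mk₂_apply, LinearMap.prodMap_apply,
        Prod.fst_add, Prod.fst_zero] using hjac a b c
    · simp only [sdBr, LinearMap.mk₂_apply, LinearMap.prodMap_apply, Prod.snd_add,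
        Prod.snd_zero, map_sub, hφψ, hψiψ, hαiβ, hαiα, hαibr, hbb]
      rw [m2 (β (αi b)) (β c) (φ u), m2 (β (αi c)) (β a) (φ v),
        m2 (β (αi a)) (β b) (φ w)]
      simp only [hc, hααi]
      abel
  · -- leibniz
    rintro ⟨a, u⟩ ⟨b, v⟩ ⟨c, w⟩
    refine Prod.ext ?_ ?_
    · simpa only [sdBr, sdMul, LinearMap.mk₂_apply, LinearMap.prodMap_apply,
        Prod.fst_add] using hlei a b c
    · simp only [sdBr, sdMul, LinearMap.mk₂_apply, LinearMap.prodMap_apply,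
        Prod.snd_add, map_add, map_sub]
      have b1 : αi (β (br (α a) c)) = br (β a) (αi (β c)) :=
        hαinj (by rw [hααi, hbb, hba, hααi, hc])
      have b2 : ψi (φ (ψ v)) = φ v := by rw [hφψ, hψiψ]
      have b3 : rho (α a) (ψi (φ v)) = ψi (φ (rho (β a) v)) := by
        rw [hφrho, hc, hψirho]
      have kB : rho (α (β a)) (lam (αi (β c)) (ψi (φ v)))
          = lam (αi (β (br (α a) c))) (ψi (φ (ψ v)))
            + lam (αi (β (β c))) (ψi (φ (rho (β a) v))) := by
        rw [m3, hψψi, b3, ← b1, ← b2, ← hαiβ]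
      have e4 : mul (β (β (αi b))) (β (β (αi c)))
          = mul (β (β (β (αi (αi c))))) (β b) := by
        apply hαinj
        rw [hma, hma]
        simp only [hc, hααi]
        rw [← hc, hmc]
        simp only [hc, hααi]
      have inst := m4 (β (β (αi (αi c)))) (β b) (φ (φ u))
      simp only [hc, hααi] at inst
      have s3 : rho (mul (β (αi b)) (β (αi c))) (φ (φ u))
          = lam (β (β (αi c))) (rho b (ψi (φ (φ u))))
            + lam (β b) (rho (β (αi c)) (ψi (φ (φ u)))) := by
        apply hψinj
        simp only [hψrho, hψlam, map_add, hψψi, hmb]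
        rw [e4, inst]
      have c1 : ψi (φ (φ (ψ u))) = φ (φ u) := by rw [hφψ, hφψ, hψiψ]
      have c2 : αi (β (mul b c)) = mul (β (αi b)) (β (αi c)) := by
        simp only [hαiβ, hαimul, hmb]
      have c3 : ψi (φ (rho (αi (β b)) (ψi (φ (ψ u))))) = rho b (ψi (φ (φ u))) := by
        rw [hφψ, hψiψ, hφrho, hααi, hψirho]
      have kC : rho (αi (β (mul b c))) (ψi (φ (φ (ψ u))))
          = lam (αi (β (β c))) (ψi (φ (rho (αi (β b)) (ψi (φ (ψ u))))))
            + lam (β b) (rho (αi (β c)) (ψi (φ (φ u)))) := by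
        rw [c1, c2, c3]
        simp only [hαiβ]
        rw [s3]
      rw [m3 a b w, kB, kC]
      abel
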